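/- For every real δ with 1/2 < δ < 1 there exists a constant C > 0 such that for all t > 0 one has ∫₀ᵗ (1+t-s)^(-3/2) · ((1+s)^(1/2-δ) - (1+t)^(1/2-δ)) · (1+s)^(-1/2) ds ≤ C · (1+t)^(-1/2-δ). (Note that for 0 ≤ s ≤ t and δ > 1/2 one has (1+s)^(1/2-δ) ≥ (1+t)^(1/2-δ), so the integrand is nonnegative.) -/

import Mathlib

/-!
Split the integral at `s = t/2`. On `[0, t/2]` the kernel `(1+t-s)^(-3/2)` is comparable to
`(1+t)^(-3/2)`, the bracket is at most `(1+s)^(1/2-δ)`, and `∫₀^{t/2} (1+s)^(-δ) ds ≲ (1+t)^(1-δ)`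
since `δ < 1`. On `[t/2, t]` the weight `(1+s)^(-1-δ)` is comparable to `(1+t)^(-1-δ)`, the mean
value theorem bounds the bracket by `(δ - 1/2)(t - s)(1+s)^(-1/2-δ)`, and the factor `t - s`
tames the kernel down to `(1+t-s)^(-1/2)`, whose integral is `≲ (1+t)^(1/2)`.
-/

open MeasureTheory Set intervalIntegral

lemma rpow_le_two_rpow_neg_mul_of_half_le {u y q : ℝ} (hu : 0 < u) (hy : u / 2 ≤ y) (hq : q ≤ 0) :
    y ^ q ≤ 2 ^ (-q) * u ^ q :=
  calc y ^ q ≤ (u / 2) ^ q := Real.rpow_le_rpow_of_nonpos (by positivity) hy hq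
    _ = 2 ^ (-q) * u ^ q := by
      rw [Real.div_rpow hu.le zero_le_two, Real.rpow_neg zero_le_two, div_eq_inv_mul]

lemma rpow_sub_rpow_le_of_nonpos {p x y : ℝ} (hp : p ≤ 0) (hx : 0 < x) (hxy : x ≤ y) :
    x ^ p - y ^ p ≤ -p * x ^ (p - 1) * (y - x) := by
  have hcont : ContinuousOn (fun z : ℝ => -z ^ p) (Ici x) :=
    (continuousOn_id.rpow_const fun z hz => Or.inl (hx.trans_le hz).ne').neg
  have hdiff : DifferentiableOn ℝ (fun z : ℝ => -z ^ p) (interior (Ici x)) := fun z hz => by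
    rw [interior_Ici] at hz
    exact ((Real.differentiableAt_rpow_const_of_ne p (hx.trans hz).ne').neg).differentiableWithinAt
  have hderiv : ∀ z ∈ interior (Ici x), deriv (fun z : ℝ => -z ^ p) z ≤ -p * x ^ (p - 1) := by
    intro z hz
    rw [interior_Ici] at hz
    rw [deriv.fun_neg, Real.deriv_rpow_const, ← neg_mul]
    exact mul_le_mul_of_nonneg_left
      (Real.rpow_le_rpow_of_nonpos hx hz.le (by linarith)) (neg_nonneg.2 hp)
  linarith [(convex_Ici x).image_sub_le_mul_sub_of_deriv_le hcont hdiff hderiv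
    x self_mem_Ici y hxy hxy]

lemma integral_rpow_le_of_nonneg {r a : ℝ} (hr : -1 < r) (ha : 0 ≤ a) (b : ℝ) :
    ∫ x in a..b, x ^ r ≤ b ^ (r + 1) / (r + 1) := by
  rw [integral_rpow (Or.inl hr)]
  have : 0 < r + 1 := by linarith
  gcongr
  exact sub_le_self _ (Real.rpow_nonneg ha _)

noncomputable def convIntegrand (δ t s : ℝ) : ℝ :=
  (1 + t - s) ^ (-(3:ℝ)/2) * ((1 + s) ^ ((1:ℝ)/2 - δ) - (1 + t) ^ ((1:ℝ)/2 - δ)) *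
    (1 + s) ^ (-(1:ℝ)/2)

lemma continuousOn_convIntegrand (δ t : ℝ) : ContinuousOn (convIntegrand δ t) (Icc 0 t) := by
  intro s hs
  have h1 : 1 + t - s ≠ 0 := by linarith [hs.2]
  have h2 : 1 + s ≠ 0 := by linarith [hs.1]
  unfold convIntegrand
  exact ContinuousAt.continuousWithinAt
    (by fun_prop (disch := first | exact Or.inl h1 | exact Or.inl h2))

lemma intervalIntegrable_convIntegrand {δ t a b : ℝ} (ha : 0 ≤ a) (hab : a ≤ b) (hb : b ≤ t) :
    IntervalIntegrable (convIntegrand δ t) volume a b :=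
  ((continuousOn_convIntegrand δ t).mono (Icc_subset_Icc ha hb)).intervalIntegrable_of_Icc hab

lemma convIntegrand_le_of_le_half {δ t s : ℝ} (hδ : 1/2 ≤ δ) (hs : 0 ≤ s) (hst : s ≤ t / 2) :
    convIntegrand δ t s ≤ 2 ^ ((3:ℝ)/2) * (1 + t) ^ (-(3:ℝ)/2) * (1 + s) ^ (-δ) := by
  have hs1 : 0 < 1 + s := by linarith
  have ht1 : 0 < 1 + t := by linarith
  have hkernel : (1 + t - s) ^ (-(3:ℝ)/2) ≤ 2 ^ ((3:ℝ)/2) * (1 + t) ^ (-(3:ℝ)/2) := by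
    have := rpow_le_two_rpow_neg_mul_of_half_le ht1 (y := 1 + t - s) (by linarith)
      (by norm_num : -(3:ℝ)/2 ≤ 0)
    rwa [show -(-(3:ℝ)/2) = 3/2 by ring] at this
  have hdiff_nonneg : 0 ≤ (1 + s) ^ ((1:ℝ)/2 - δ) - (1 + t) ^ ((1:ℝ)/2 - δ) :=
    sub_nonneg.2 (Real.rpow_le_rpow_of_nonpos hs1 (by linarith) (by linarith))
  have hdiff_le : (1 + s) ^ ((1:ℝ)/2 - δ) - (1 + t) ^ ((1:ℝ)/2 - δ) ≤ (1 + s) ^ ((1:ℝ)/2 - δ) :=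
    sub_le_self _ (Real.rpow_nonneg ht1.le _)
  calc convIntegrand δ t s
      ≤ 2 ^ ((3:ℝ)/2) * (1 + t) ^ (-(3:ℝ)/2) * (1 + s) ^ ((1:ℝ)/2 - δ) * (1 + s) ^ (-(1:ℝ)/2) := by
        unfold convIntegrand; gcongr
    _ = 2 ^ ((3:ℝ)/2) * (1 + t) ^ (-(3:ℝ)/2) * (1 + s) ^ (-δ) := by
        rw [mul_assoc _ ((1 + s) ^ _), ← Real.rpow_add hs1]; ring_nf

lemma convIntegrand_le_of_half_le {δ t s : ℝ} (hδ : 1/2 ≤ δ) (hts : t / 2 ≤ s) (hst : s ≤ t) :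
    convIntegrand δ t s ≤
      (δ - 1/2) * 2 ^ (1 + δ) * (1 + t) ^ (-1 - δ) * (1 + t - s) ^ (-(1:ℝ)/2) := by
  have hs1 : 0 < 1 + s := by linarith
  have ht1 : 0 < 1 + t := by linarith
  have hts1 : 0 < 1 + t - s := by linarith
  have hdiff : (1 + s) ^ ((1:ℝ)/2 - δ) - (1 + t) ^ ((1:ℝ)/2 - δ) ≤
      (δ - 1/2) * (1 + s) ^ (-(1:ℝ)/2 - δ) * (t - s) := by
    have := rpow_sub_rpow_le_of_nonpos (by linarith : (1:ℝ)/2 - δ ≤ 0) hs1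
      (by linarith : 1 + s ≤ 1 + t)
    convert this using 2 <;> ring_nf
  have hkernel : (t - s) * (1 + t - s) ^ (-(3:ℝ)/2) ≤ (1 + t - s) ^ (-(1:ℝ)/2) :=
    calc (t - s) * (1 + t - s) ^ (-(3:ℝ)/2) ≤ (1 + t - s) * (1 + t - s) ^ (-(3:ℝ)/2) := by
          gcongr; linarith
      _ = (1 + t - s) ^ (-(1:ℝ)/2) := by
          rw [mul_comm, ← Real.rpow_add_one hts1.ne']; norm_num
  have hweight : (1 + s) ^ (-1 - δ) ≤ 2 ^ (1 + δ) * (1 + t) ^ (-1 - δ) := by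
    have := rpow_le_two_rpow_neg_mul_of_half_le ht1 (y := 1 + s) (q := -1 - δ)
      (by linarith) (by linarith)
    rwa [show -(-1 - δ) = 1 + δ by ring] at this
  calc convIntegrand δ t s
      ≤ (1 + t - s) ^ (-(3:ℝ)/2) * ((δ - 1/2) * (1 + s) ^ (-(1:ℝ)/2 - δ) * (t - s)) *
          (1 + s) ^ (-(1:ℝ)/2) := by
        unfold convIntegrand; gcongr
    _ = (δ - 1/2) * ((t - s) * (1 + t - s) ^ (-(3:ℝ)/2)) * (1 + s) ^ (-1 - δ) := by
        rw [show (-1 - δ) = (-(1:ℝ)/2 - δ) + -(1:ℝ)/2 by ring, Real.rpow_add hs1]; ring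
    _ ≤ (δ - 1/2) * (1 + t - s) ^ (-(1:ℝ)/2) * (2 ^ (1 + δ) * (1 + t) ^ (-1 - δ)) := by
        have : 0 ≤ δ - 1/2 := by linarith
        gcongr
    _ = (δ - 1/2) * 2 ^ (1 + δ) * (1 + t) ^ (-1 - δ) * (1 + t - s) ^ (-(1:ℝ)/2) := by ring

lemma integral_convIntegrand_left_half_le {δ t : ℝ} (hδ1 : 1/2 ≤ δ) (hδ2 : δ < 1) (ht : 0 ≤ t) :
    ∫ s in (0:ℝ)..t/2, convIntegrand δ t s ≤
      2 ^ ((3:ℝ)/2) / (1 - δ) * (1 + t) ^ (-(1:ℝ)/2 - δ) := by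
  have ht1 : 0 < 1 + t := by linarith
  have hδ : 0 < 1 - δ := by linarith
  have hint : IntervalIntegrable (fun s : ℝ => (1 + s) ^ (-δ)) volume 0 (t/2) := by
    refine ContinuousOn.intervalIntegrable fun s hs => ContinuousAt.continuousWithinAt ?_
    rw [uIcc_of_le (by linarith)] at hs
    have : 1 + s ≠ 0 := by linarith [hs.1]
    fun_prop (disch := exact Or.inl this)
  have hweight : ∫ s in (0:ℝ)..t/2, (1 + s) ^ (-δ) ≤ (1 + t) ^ (1 - δ) / (1 - δ) :=
    calc ∫ s in (0:ℝ)..t/2, (1 + s) ^ (-δ) = ∫ x in 1 + 0..1 + t/2, x ^ (-δ) :=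
          integral_comp_add_left (fun x : ℝ => x ^ (-δ)) 1
      _ ≤ (1 + t/2) ^ (-δ + 1) / (-δ + 1) :=
          integral_rpow_le_of_nonneg (by linarith) (by norm_num) _
      _ ≤ (1 + t) ^ (1 - δ) / (1 - δ) := by
          rw [neg_add_eq_sub]; gcongr; linarith
  calc ∫ s in (0:ℝ)..t/2, convIntegrand δ t s
      ≤ ∫ s in (0:ℝ)..t/2, 2 ^ ((3:ℝ)/2) * (1 + t) ^ (-(3:ℝ)/2) * (1 + s) ^ (-δ) :=
        integral_mono_on (by linarith)
          (intervalIntegrable_convIntegrand le_rfl (by linarith) (by linarith))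
          (hint.const_mul _) fun s hs => convIntegrand_le_of_le_half hδ1 hs.1 hs.2
    _ = 2 ^ ((3:ℝ)/2) * (1 + t) ^ (-(3:ℝ)/2) * ∫ s in (0:ℝ)..t/2, (1 + s) ^ (-δ) :=
        integral_const_mul _ _
    _ ≤ 2 ^ ((3:ℝ)/2) * (1 + t) ^ (-(3:ℝ)/2) * ((1 + t) ^ (1 - δ) / (1 - δ)) := by
        gcongr
    _ = 2 ^ ((3:ℝ)/2) / (1 - δ) * (1 + t) ^ (-(1:ℝ)/2 - δ) := by
        rw [show -(1:ℝ)/2 - δ = -(3:ℝ)/2 + (1 - δ) by ring, Real.rpow_add ht1]; ring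

lemma integral_convIntegrand_right_half_le {δ t : ℝ} (hδ : 1/2 ≤ δ) (ht : 0 ≤ t) :
    ∫ s in t/2..t, convIntegrand δ t s ≤ (δ - 1/2) * 2 ^ (2 + δ) * (1 + t) ^ (-(1:ℝ)/2 - δ) := by
  have ht1 : 0 < 1 + t := by linarith
  have hint : IntervalIntegrable (fun s : ℝ => (1 + t - s) ^ (-(1:ℝ)/2)) volume (t/2) t := by
    refine ContinuousOn.intervalIntegrable fun s hs => ContinuousAt.continuousWithinAt ?_
    rw [uIcc_of_le (by linarith)] at hs
    have : 1 + t - s ≠ 0 := by linarith [hs.2]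
    fun_prop (disch := exact Or.inl this)
  have hkernel : ∫ s in t/2..t, (1 + t - s) ^ (-(1:ℝ)/2) ≤ 2 * (1 + t) ^ ((1:ℝ)/2) :=
    calc ∫ s in t/2..t, (1 + t - s) ^ (-(1:ℝ)/2) = ∫ x in 1 + t - t..1 + t - t/2, x ^ (-(1:ℝ)/2) :=
          integral_comp_sub_left (fun x : ℝ => x ^ (-(1:ℝ)/2)) (1 + t)
      _ ≤ (1 + t - t/2) ^ (-(1:ℝ)/2 + 1) / (-(1:ℝ)/2 + 1) :=
          integral_rpow_le_of_nonneg (by norm_num) (by linarith) _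
      _ ≤ 2 * (1 + t) ^ ((1:ℝ)/2) := by
          rw [show -(1:ℝ)/2 + 1 = 1/2 by norm_num, div_eq_mul_inv, mul_comm]; norm_num
          gcongr <;> linarith
  have hδ0 : 0 ≤ δ - 1/2 := by linarith
  calc ∫ s in t/2..t, convIntegrand δ t s
      ≤ ∫ s in t/2..t, (δ - 1/2) * 2 ^ (1 + δ) * (1 + t) ^ (-1 - δ) * (1 + t - s) ^ (-(1:ℝ)/2) :=
        integral_mono_on (by linarith)
          (intervalIntegrable_convIntegrand (by linarith) (by linarith) le_rfl)
          (hint.const_mul _) fun s hs => convIntegrand_le_of_half_le hδ hs.1 hs.2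
    _ = (δ - 1/2) * 2 ^ (1 + δ) * (1 + t) ^ (-1 - δ) * ∫ s in t/2..t, (1 + t - s) ^ (-(1:ℝ)/2) :=
        integral_const_mul _ _
    _ ≤ (δ - 1/2) * 2 ^ (1 + δ) * (1 + t) ^ (-1 - δ) * (2 * (1 + t) ^ ((1:ℝ)/2)) := by
        gcongr
    _ = (δ - 1/2) * 2 ^ (2 + δ) * (1 + t) ^ (-(1:ℝ)/2 - δ) := by
        rw [show (2:ℝ) + δ = 1 + δ + 1 by ring, Real.rpow_add_one two_ne_zero,
          show -(1:ℝ)/2 - δ = -1 - δ + 1/2 by ring, Real.rpow_add ht1]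
        ring

theorem integral_convolution_bound_shifted
    (δ : ℝ) (hδ1 : 1/2 < δ) (hδ2 : δ < 1) :
    ∃ C : ℝ, 0 < C ∧ ∀ t : ℝ, 0 < t →
      ∫ s in Set.Ioo (0:ℝ) t,
          (1 + t - s) ^ (-(3:ℝ)/2) *
            ((1 + s) ^ ((1:ℝ)/2 - δ) - (1 + t) ^ ((1:ℝ)/2 - δ)) *
            (1 + s) ^ (-(1:ℝ)/2)
        ≤ C * (1 + t) ^ (-(1:ℝ)/2 - δ) := by
  have hδ1' : 0 < δ - 1/2 := by linarith
  have hδ2' : 0 < 1 - δ := by linarith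
  refine ⟨2 ^ ((3:ℝ)/2) / (1 - δ) + (δ - 1/2) * 2 ^ (2 + δ), by positivity, fun t ht => ?_⟩
  calc ∫ s in Ioo 0 t, convIntegrand δ t s
      = (∫ s in (0:ℝ)..t/2, convIntegrand δ t s) + ∫ s in t/2..t, convIntegrand δ t s := by
        rw [integral_add_adjacent_intervals
          (intervalIntegrable_convIntegrand le_rfl (by linarith) (by linarith))
          (intervalIntegrable_convIntegrand (by linarith) (by linarith) le_rfl),
          integral_of_le ht.le,
          integral_Ioc_eq_integral_Ioo]
    _ ≤ 2 ^ ((3:ℝ)/2) / (1 - δ) * (1 + t) ^ (-(1:ℝ)/2 - δ) +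
          (δ - 1/2) * 2 ^ (2 + δ) * (1 + t) ^ (-(1:ℝ)/2 - δ) :=
        add_le_add (integral_convIntegrand_left_half_le hδ1.le hδ2 ht.le)
          (integral_convIntegrand_right_half_le hδ1.le ht.le)
    _ = _ := by ring
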